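/- (Nakao's difference inequality.) Let φ : [0,∞) → [0,∞) be a function for which there exists a constant K > 0 such that sup_{t ≤ s ≤ t+1} φ(s) ≤ K (φ(t) − φ(t+1)) for every t ≥ 0. Then there exist constants A > 0 and B > 0 such that φ(t) ≤ A e^{−Bt} for all t ≥ 0. -/

import Mathlib

/-!
Taking `s = t + 1` in the hypothesis gives `φ (t + 1) ≤ q φ t` with `q = K / (K + 1) < 1`, so
`φ n ≤ qⁿ φ 0` along the integers. Taking `t = ⌊s⌋` and dropping `φ (⌊s⌋ + 1) ≥ 0` gives
`φ s ≤ K φ ⌊s⌋`, which transfers the geometric decay to all `s ≥ 0` at the cost of one factor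
`q⁻¹`, i.e. `φ s ≤ (K + 1) φ 0 e^{-B s}` with `B = -log q`.
-/

open Real

lemma le_div_add_one_mul_of_le_mul_sub {K a b : ℝ} (hK : 0 < K) (h : b ≤ K * (a - b)) :
    b ≤ K / (K + 1) * a := by
  rw [div_mul_eq_mul_div, le_div_iff₀ (by linarith)]
  linarith

lemma pow_floor_le_inv_mul_exp {q t : ℝ} (hq₀ : 0 < q) (hq₁ : q ≤ 1) :
    q ^ ⌊t⌋₊ ≤ q⁻¹ * exp (log q * t) := by
  rw [← rpow_natCast, rpow_def_of_pos hq₀, ← exp_log (inv_pos.2 hq₀), ← exp_add, log_inv]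
  have hfloor : t < ⌊t⌋₊ + 1 := Nat.lt_floor_add_one t
  have hlog : log q ≤ 0 := log_nonpos hq₀.le hq₁
  gcongr
  nlinarith

section Nakao

variable {φ : ℝ → ℝ} {K : ℝ}
  (h : ∀ t ≥ (0:ℝ), ∀ s : ℝ, t ≤ s → s ≤ t + 1 → φ s ≤ K * (φ t - φ (t + 1)))
include h

lemma nakao_le_geom_natCast (hK : 0 < K) (n : ℕ) : φ n ≤ (K / (K + 1)) ^ n * φ 0 := by
  have hgeom := le_geom (u := fun k : ℕ ↦ φ k) (c := K / (K + 1)) (by positivity) n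
    fun k _ ↦ by
      have hk : (0:ℝ) ≤ k := k.cast_nonneg
      push_cast
      exact le_div_add_one_mul_of_le_mul_sub hK (h k hk (k + 1) (by linarith) le_rfl)
  simpa using hgeom

lemma nakao_le_mul_floor (hφ : ∀ t ≥ (0:ℝ), 0 ≤ φ t) (hK : 0 ≤ K) {t : ℝ} (ht : 0 ≤ t) :
    φ t ≤ K * φ ⌊t⌋₊ := by
  have hn : (0:ℝ) ≤ ⌊t⌋₊ := Nat.cast_nonneg _
  have hstep := h _ hn t (Nat.floor_le ht) (Nat.lt_floor_add_one t).le
  have hnext := hφ (⌊t⌋₊ + 1) (by linarith)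
  nlinarith

end Nakao

/-- Nakao's difference inequality: if `φ : [0,∞) → [0,∞)` satisfies
`sup_{t ≤ s ≤ t+1} φ(s) ≤ K (φ(t) - φ(t+1))` for every `t ≥ 0` and some constant
`K > 0`, then `φ` decays exponentially: `φ(t) ≤ A e^{-Bt}` for some `A, B > 0`. -/
theorem nakao_difference_inequality
    (φ : ℝ → ℝ) (hφ : ∀ t ≥ (0:ℝ), 0 ≤ φ t)
    (K : ℝ) (hK : 0 < K)
    (h : ∀ t ≥ (0:ℝ), ∀ s : ℝ, t ≤ s → s ≤ t + 1 → φ s ≤ K * (φ t - φ (t + 1))) :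
    ∃ A > (0:ℝ), ∃ B > (0:ℝ), ∀ t ≥ (0:ℝ), φ t ≤ A * Real.exp (-B * t) := by
  set q := K / (K + 1)
  have hq₀ : 0 < q := by positivity
  have hq₁ : q < 1 := (div_lt_one (by linarith)).2 (by linarith)
  have hφ₀ : 0 ≤ φ 0 := hφ 0 le_rfl
  refine ⟨(K + 1) * (φ 0 + 1), by positivity, -log q, neg_pos.2 (log_neg hq₀ hq₁), ?_⟩
  intro t ht
  calc φ t ≤ K * φ ⌊t⌋₊ := nakao_le_mul_floor h hφ hK.le ht
    _ ≤ K * (q ^ ⌊t⌋₊ * φ 0) := by gcongr; exact nakao_le_geom_natCast h hK _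
    _ ≤ K * (q⁻¹ * exp (log q * t) * φ 0) := by
        gcongr; exact pow_floor_le_inv_mul_exp hq₀ hq₁.le
    _ = (K + 1) * φ 0 * exp (-(-log q) * t) := by
        rw [neg_neg, inv_div]; field_simp
    _ ≤ (K + 1) * (φ 0 + 1) * exp (-(-log q) * t) := by gcongr; linarith
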